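/- For |q|<1, one has ∑_{n≥1} q^{n(n+1)}/((1+q^{2n-1})·(-q²;q²)_n) = -(q/(1-q)) · ∑_{n≥1} (-1)^n (q;q)_n q^{n(n+1)/2}/(-q;q)_n. -/

import Mathlib

open scoped BigOperators

/-- The finite q-Pochhammer symbol `(a;q)_n = ∏_{j=0}^{n-1} (1 - a q^j)`. -/
noncomputable def qPoch (a q : ℂ) (n : ℕ) : ℂ := ∏ j ∈ Finset.range n, (1 - a * q ^ j)

/-!
Write `F(a, b; t) = ∑_k (a;p)_k t^k / (b;p)_k` in base `p = q²`. Telescoping gives the two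
contiguous relations
`(1 - t) F(a, b; t) = 1 - t (a - b) / (1 - b) · F(a, bp; tp)` and
`F(a, b; t) = (1 - at) / (1 - t) + t (b - atp) (1 - a) / ((1 - t) (1 - b)) · F(ap, bp; tp)`.
Iterating the first along `a = q², b = -q^{2N+3}, t = -q^{2N+2}` unfolds
`q²/(1+q) · F(q², -q³; -q²)` into the left-hand series; iterating the second along
`a = q^{2N+2}` (same `b`, `t`) unfolds the same value into the right-hand series, with its terms
taken in consecutive pairs. The remainders vanish because these series `F` stay bounded while the
partial products tend to zero.
-/

open Filter Topology Finset

section Analysis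

variable {R : Type*} [NormedRing R]

lemma summable_of_succ_eq_mul [CompleteSpace R] {f ρ : ℕ → R} {l : R}
    (hf : ∀ n, f (n + 1) = f n * ρ n) (hρ : Tendsto ρ atTop (𝓝 l)) (hl : ‖l‖ < 1) :
    Summable f := by
  obtain ⟨r, hlr, hr⟩ := exists_between hl
  refine summable_of_ratio_norm_eventually_le hr ?_
  filter_upwards [hρ.norm.eventually_lt_const hlr] with n hn
  calc ‖f (n + 1)‖ ≤ ‖f n‖ * ‖ρ n‖ := hf n ▸ norm_mul_le _ _
    _ ≤ r * ‖f n‖ := by rw [mul_comm]; gcongr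

lemma tendsto_pow_mul_add_atTop_nhds_zero {x : R} (hx : ‖x‖ < 1) {m : ℕ} (hm : m ≠ 0)
    (c : ℕ) : Tendsto (fun n ↦ x ^ (m * n + c)) atTop (𝓝 0) :=
  (tendsto_pow_atTop_nhds_zero_of_norm_lt_one hx).comp <|
    tendsto_atTop_mono (fun n ↦ (Nat.le_mul_of_pos_left n (Nat.pos_of_ne_zero hm)).trans
      (Nat.le_add_right _ _)) tendsto_id

lemma tsum_sub_succ {G : Type*} [AddCommGroup G] [TopologicalSpace G] [IsTopologicalAddGroup G]
    [T2Space G] {y : ℕ → G} (hs : Summable fun n ↦ y n - y (n + 1))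
    (hy : Tendsto y atTop (𝓝 0)) : ∑' n, (y n - y (n + 1)) = y 0 := by
  refine (hs.hasSum_iff_tendsto_nat.2 ?_).tsum_eq
  simp_rw [sum_range_sub']
  simpa using tendsto_const_nhds.sub hy

end Analysis

section Norms

variable {K : Type*} [NormedDivisionRing K] {z p : K}

lemma ne_one_of_norm_lt_one (hz : ‖z‖ < 1) : z ≠ 1 := by
  rintro rfl
  simp at hz

lemma one_sub_ne_zero_of_norm_lt_one (hz : ‖z‖ < 1) : 1 - z ≠ 0 :=
  sub_ne_zero.2 (ne_one_of_norm_lt_one hz).symm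

lemma one_add_ne_zero_of_norm_lt_one (hz : ‖z‖ < 1) : 1 + z ≠ 0 := by
  simpa using one_sub_ne_zero_of_norm_lt_one (z := -z) (by simpa using hz)

lemma norm_pow_lt_one (hz : ‖z‖ < 1) {j : ℕ} (hj : j ≠ 0) : ‖z ^ j‖ < 1 := by
  rw [norm_pow]
  exact pow_lt_one₀ (norm_nonneg _) hz hj

lemma norm_neg_pow_lt_one (hz : ‖z‖ < 1) {j : ℕ} (hj : j ≠ 0) : ‖-z ^ j‖ < 1 := by
  rw [norm_neg]
  exact norm_pow_lt_one hz hj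

lemma one_add_pow_ne_zero (hz : ‖z‖ < 1) {j : ℕ} (hj : j ≠ 0) : 1 + z ^ j ≠ 0 :=
  one_add_ne_zero_of_norm_lt_one (norm_pow_lt_one hz hj)

lemma norm_mul_pow_le (hp : ‖p‖ ≤ 1) (j : ℕ) : ‖z * p ^ j‖ ≤ ‖z‖ := by
  rw [norm_mul, norm_pow]
  exact mul_le_of_le_one_right (norm_nonneg _) (pow_le_one₀ (norm_nonneg _) hp)

lemma one_sub_mul_pow_ne_zero (hz : ‖z‖ < 1) (hp : ‖p‖ ≤ 1) (j : ℕ) :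
    1 - z * p ^ j ≠ 0 :=
  one_sub_ne_zero_of_norm_lt_one ((norm_mul_pow_le hp j).trans_lt hz)

lemma norm_one_sub_le (z : K) : ‖1 - z‖ ≤ 1 + ‖z‖ := by
  simpa using norm_sub_le 1 z

lemma one_sub_norm_le (z : K) : 1 - ‖z‖ ≤ ‖1 - z‖ := by
  simpa using norm_sub_norm_le 1 z

end Norms

section QPoch

lemma qPoch_succ (a p : ℂ) (n : ℕ) : qPoch a p (n + 1) = qPoch a p n * (1 - a * p ^ n) :=
  prod_range_succ _ _

lemma qPoch_succ' (a p : ℂ) (n : ℕ) : qPoch a p (n + 1) = (1 - a) * qPoch (a * p) p n := by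
  simp only [qPoch, prod_range_succ', pow_zero, mul_one, pow_succ', mul_comm (1 - a)]
  simp only [mul_assoc]

lemma qPoch_shift {a : ℂ} (ha : a ≠ 1) (p : ℂ) (n : ℕ) :
    qPoch (a * p) p n = qPoch a p n * (1 - a * p ^ n) / (1 - a) := by
  rw [eq_div_iff (sub_ne_zero.2 ha.symm), ← qPoch_succ, qPoch_succ', mul_comm]

end QPoch

section Fine

variable {a b p t : ℂ}

noncomputable def fineTerm (a b p t : ℂ) (k : ℕ) : ℂ := qPoch a p k * t ^ k / qPoch b p k

-- Fine's function `F(a/p, b/p; t)` in base `p`.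
noncomputable def fine (a b p t : ℂ) : ℂ := ∑' k, fineTerm a b p t k

lemma fineTerm_zero : fineTerm a b p t 0 = 1 := by
  simp [fineTerm, qPoch]

lemma fineTerm_succ (k : ℕ) :
    fineTerm a b p t (k + 1) = fineTerm a b p t k * ((1 - a * p ^ k) * t / (1 - b * p ^ k)) := by
  simp only [fineTerm, qPoch_succ, pow_succ, div_eq_mul_inv, mul_inv]
  ring

lemma fineTerm_shift_b_t (hb : b ≠ 1) (k : ℕ) :
    fineTerm a (b * p) p (t * p) k
      = fineTerm a b p t k * ((1 - b) * p ^ k / (1 - b * p ^ k)) := by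
  simp only [fineTerm, qPoch_shift hb, mul_pow, div_eq_mul_inv, mul_inv, inv_inv]
  ring

lemma fineTerm_shift_a_b_t (ha : a ≠ 1) (hb : b ≠ 1) (k : ℕ) :
    fineTerm (a * p) (b * p) p (t * p) k
      = fineTerm a b p t k * ((1 - a * p ^ k) * (1 - b) * p ^ k / ((1 - a) * (1 - b * p ^ k))) := by
  simp only [fineTerm, qPoch_shift ha, qPoch_shift hb, mul_pow, div_eq_mul_inv, mul_inv,
    inv_inv]
  ring

lemma summable_fineTerm (hp : ‖p‖ < 1) (ht : ‖t‖ < 1) : Summable (fineTerm a b p t) := by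
  have hpow := tendsto_pow_atTop_nhds_zero_of_norm_lt_one hp
  have hρ : Tendsto (fun k ↦ (1 - a * p ^ k) * t / (1 - b * p ^ k)) atTop (𝓝 t) := by
    have h1 : Tendsto (fun k ↦ 1 - a * p ^ k) atTop (𝓝 1) := by
      simpa using tendsto_const_nhds.sub (hpow.const_mul a)
    have h2 : Tendsto (fun k ↦ 1 - b * p ^ k) atTop (𝓝 1) := by
      simpa using tendsto_const_nhds.sub (hpow.const_mul b)
    have h := (h1.mul_const t).div h2 one_ne_zero
    rwa [one_mul, div_one] at h
  exact summable_of_succ_eq_mul fineTerm_succ hρ ht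

theorem one_sub_mul_fine (hp : ‖p‖ < 1) (hb : ‖b‖ < 1) (ht : ‖t‖ < 1) :
    (1 - t) * fine a b p t = 1 - t * (a - b) / (1 - b) * fine a (b * p) p (t * p) := by
  have hf : Summable (fineTerm a b p t) := summable_fineTerm hp ht
  have hb1 : 1 - b ≠ 0 := one_sub_ne_zero_of_norm_lt_one hb
  have hterm : ∀ k, t * (a - b) / (1 - b) * fineTerm a (b * p) p (t * p) k
      = (fineTerm a b p t k - fineTerm a b p t (k + 1)) - (1 - t) * fineTerm a b p t k := by
    intro k
    have := one_sub_mul_pow_ne_zero hb hp.le k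
    rw [fineTerm_shift_b_t (ne_one_of_norm_lt_one hb), fineTerm_succ]
    field_simp
    ring
  have htel : Summable fun k ↦ fineTerm a b p t k - fineTerm a b p t (k + 1) :=
    hf.sub ((summable_nat_add_iff 1).2 hf)
  have h : t * (a - b) / (1 - b) * fine a (b * p) p (t * p) = 1 - (1 - t) * fine a b p t := by
    rw [fine, fine, ← tsum_mul_left, tsum_congr hterm, htel.tsum_sub (hf.mul_left _),
      tsum_sub_succ htel hf.tendsto_atTop_zero, tsum_mul_left, fineTerm_zero]
  linear_combination h

theorem fine_eq_add_mul_fine (hp : ‖p‖ < 1) (ha : a ≠ 1) (hb : ‖b‖ < 1)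
    (ht : ‖t‖ < 1) :
    fine a b p t = (1 - a * t) / (1 - t)
      + t * (b - a * t * p) * (1 - a) / ((1 - t) * (1 - b)) * fine (a * p) (b * p) p (t * p) := by
  set f := fineTerm a b p t
  set c := t * (b - a * t * p) * (1 - a) / ((1 - t) * (1 - b))
  set w : ℕ → ℂ := fun k ↦ (1 - a * t * p ^ k) / (1 - t) * f k
  have hf : Summable f := summable_fineTerm hp ht
  have hg : Summable (fineTerm (a * p) (b * p) p (t * p)) :=
    summable_fineTerm hp
      (by simpa using mul_lt_one_of_nonneg_of_lt_one_left (norm_nonneg t) ht hp.le)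
  have hterm : ∀ k, f k - c * fineTerm (a * p) (b * p) p (t * p) k = w k - w (k + 1) := by
    intro k
    have := one_sub_mul_pow_ne_zero hb hp.le k
    have := sub_ne_zero.2 ha.symm
    have := one_sub_ne_zero_of_norm_lt_one hb
    have := one_sub_ne_zero_of_norm_lt_one ht
    simp only [w, c, f]
    rw [fineTerm_shift_a_b_t ha (ne_one_of_norm_lt_one hb), fineTerm_succ]
    field_simp
    ring
  have hw : Tendsto w atTop (𝓝 0) := by
    have hpow := tendsto_pow_atTop_nhds_zero_of_norm_lt_one hp
    simpa using (((tendsto_const_nhds.sub (hpow.const_mul (a * t))).div_const (1 - t)).mul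
      hf.tendsto_atTop_zero)
  have hsum : Summable fun k ↦ w k - w (k + 1) := by
    simpa only [← hterm] using hf.sub (hg.mul_left c)
  have h := tsum_sub_succ hsum hw
  rw [← tsum_congr hterm, hf.tsum_sub (hg.mul_left c), tsum_mul_left] at h
  simp only [w, pow_zero, mul_one, fineTerm_zero, f] at h
  rw [fine, fine]
  linear_combination h

lemma norm_fineTerm_le (ha : ‖a‖ ≤ 1) (hp : ‖p‖ ≤ 1) (hb : ‖b‖ < 1) (k : ℕ) :
    ‖fineTerm a b p t k‖ ≤ (2 * ‖t‖ / (1 - ‖b‖)) ^ k := by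
  induction k with
  | zero => simp [fineTerm_zero]
  | succ k ih =>
    have hnum : ‖1 - a * p ^ k‖ ≤ 2 := by
      linarith [norm_one_sub_le (a * p ^ k), norm_mul_pow_le (z := a) hp k]
    have hden : 1 - ‖b‖ ≤ ‖1 - b * p ^ k‖ := by
      linarith [one_sub_norm_le (b * p ^ k), norm_mul_pow_le (z := b) hp k]
    rw [fineTerm_succ, pow_succ, norm_mul, norm_div, norm_mul]
    gcongr

lemma norm_fine_le_two (ha : ‖a‖ ≤ 1) (hp : ‖p‖ ≤ 1) (hb : ‖b‖ < 1)
    (ht : 4 * ‖t‖ ≤ 1 - ‖b‖) : ‖fine a b p t‖ ≤ 2 := by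
  have hr : 2 * ‖t‖ / (1 - ‖b‖) ≤ 1 / 2 := by
    rw [div_le_iff₀ (by linarith)]
    linarith
  have hr0 : 0 ≤ 2 * ‖t‖ / (1 - ‖b‖) := div_nonneg (by positivity) (by linarith)
  calc ‖fine a b p t‖ ≤ (1 - 2 * ‖t‖ / (1 - ‖b‖))⁻¹ :=
        tsum_of_norm_bounded (hasSum_geometric_of_lt_one hr0 (by linarith))
          (norm_fineTerm_le ha hp hb)
    _ ≤ 2 := inv_le_of_inv_le₀ two_pos (by linarith)

end Fine

section Specialization

variable {q : ℂ}

noncomputable def fineAt (q a : ℂ) (N : ℕ) : ℂ :=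
  fine a (-q ^ (2 * N + 3)) (q ^ 2) (-q ^ (2 * N + 2))

lemma fine_eq_fineAt_succ (q a : ℂ) (N : ℕ) :
    fine a (-q ^ (2 * N + 3) * q ^ 2) (q ^ 2) (-q ^ (2 * N + 2) * q ^ 2)
      = fineAt q a (N + 1) := by
  rw [fineAt]
  ring_nf

noncomputable def lhsTerm (q : ℂ) (n : ℕ) : ℂ :=
  q ^ ((n + 1) * (n + 2)) / ((1 + q ^ (2 * (n + 1) - 1)) * qPoch (-q ^ 2) (q ^ 2) (n + 1))

noncomputable def lhsRatio (q : ℂ) (n : ℕ) : ℂ :=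
  q ^ (2 * n + 4) * (1 + q ^ (2 * n + 1)) / ((1 + q ^ (2 * n + 3)) * (1 + q ^ (2 * n + 4)))

noncomputable def rhsTerm (q : ℂ) (n : ℕ) : ℂ :=
  (-1 : ℂ) ^ (n + 1) * qPoch q q (n + 1) * q ^ ((n + 1) * (n + 2) / 2) / qPoch (-q) q (n + 1)

noncomputable def rhsRatio (q : ℂ) (n : ℕ) : ℂ :=
  -q ^ (n + 2) * (1 - q ^ (n + 2)) / (1 + q ^ (n + 2))

lemma fineAt_sq_recurrence (hq : ‖q‖ < 1) (N : ℕ) :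
    (1 + q ^ (2 * N + 2)) * fineAt q (q ^ 2) N
      = 1 + lhsRatio q N * (1 + q ^ (2 * N + 4)) * fineAt q (q ^ 2) (N + 1) := by
  have h := one_sub_mul_fine (a := q ^ 2) (norm_pow_lt_one hq two_ne_zero)
    (norm_neg_pow_lt_one hq (j := 2 * N + 3) (by omega))
    (norm_neg_pow_lt_one hq (j := 2 * N + 2) (by omega))
  rw [fine_eq_fineAt_succ] at h
  have hc : -(-q ^ (2 * N + 2)) * (q ^ 2 - -q ^ (2 * N + 3)) / (1 - -q ^ (2 * N + 3))
      = lhsRatio q N * (1 + q ^ (2 * N + 4)) := by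
    have := one_add_pow_ne_zero hq (j := 2 * N + 3) (by omega)
    have := one_add_pow_ne_zero hq (j := 2 * N + 4) (by omega)
    simp only [lhsRatio, sub_neg_eq_add]
    field_simp
    ring
  rw [fineAt]
  linear_combination h + fineAt q (q ^ 2) (N + 1) * hc

lemma fineAt_pow_recurrence (hq : ‖q‖ < 1) (N : ℕ) :
    fineAt q (q ^ (2 * N + 2)) N = (1 + rhsRatio q (2 * N)) + rhsRatio q (2 * N)
      * rhsRatio q (2 * N + 1) * fineAt q (q ^ (2 * (N + 1) + 2)) (N + 1) := by
  have ha : ‖q ^ (2 * N + 2)‖ < 1 := norm_pow_lt_one hq (by omega)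
  have h := fine_eq_add_mul_fine (norm_pow_lt_one hq two_ne_zero)
    (ne_one_of_norm_lt_one ha) (norm_neg_pow_lt_one hq (j := 2 * N + 3) (by omega))
    (norm_neg_pow_lt_one hq (j := 2 * N + 2) (by omega))
  rw [show q ^ (2 * N + 2) * q ^ 2 = q ^ (2 * (N + 1) + 2) by ring, fine_eq_fineAt_succ] at h
  have := one_add_pow_ne_zero hq (j := 2 * N + 2) (by omega)
  have := one_add_pow_ne_zero hq (j := 2 * N + 1 + 2) (by omega)
  have hA : (1 - q ^ (2 * N + 2) * -q ^ (2 * N + 2)) / (1 - -q ^ (2 * N + 2))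
      = 1 + rhsRatio q (2 * N) := by
    simp only [rhsRatio, sub_neg_eq_add]
    field_simp
    ring
  have hB : -q ^ (2 * N + 2) * (-q ^ (2 * N + 3) - q ^ (2 * N + 2) * -q ^ (2 * N + 2) * q ^ 2)
        * (1 - q ^ (2 * N + 2)) / ((1 - -q ^ (2 * N + 2)) * (1 - -q ^ (2 * N + 3)))
      = rhsRatio q (2 * N) * rhsRatio q (2 * N + 1) := by
    simp only [rhsRatio, sub_neg_eq_add]
    field_simp
    ring
  rw [fineAt]
  linear_combination h + hA + fineAt q (q ^ (2 * (N + 1) + 2)) (N + 1) * hB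

lemma isBoundedUnder_norm_fineAt (hq : ‖q‖ < 1) {a : ℕ → ℂ}
    (ha : ∀ N, ‖a N‖ ≤ 1) :
    IsBoundedUnder (· ≤ ·) atTop (norm ∘ fun N ↦ fineAt q (a N) N) := by
  refine isBoundedUnder_of_eventually_le (a := 2) ?_
  have hsmall := (tendsto_pow_mul_add_atTop_nhds_zero hq two_ne_zero 2).norm.eventually_lt_const
    (show ‖(0 : ℂ)‖ < (1 - ‖q‖) / 4 by rw [norm_zero]; linarith)
  filter_upwards [hsmall] with N hN
  have hb : ‖-q ^ (2 * N + 3)‖ ≤ ‖q‖ := by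
    rw [norm_neg, norm_pow]
    exact pow_le_of_le_one (norm_nonneg _) hq.le (by omega)
  refine norm_fine_le_two (ha N) ?_ (norm_neg_pow_lt_one hq (by omega)) ?_
  · rw [norm_pow]
    exact pow_le_one₀ (norm_nonneg _) hq.le
  · rw [norm_neg]
    linarith

lemma lhsTerm_succ (hq : ‖q‖ < 1) (n : ℕ) :
    lhsTerm q (n + 1) = lhsTerm q n * lhsRatio q n := by
  have hQ : qPoch (-q ^ 2) (q ^ 2) (n + 1 + 1)
      = qPoch (-q ^ 2) (q ^ 2) (n + 1) * (1 + q ^ (2 * n + 4)) := by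
    rw [qPoch_succ]
    ring
  have := one_add_pow_ne_zero hq (j := 2 * n + 1) (by omega)
  rw [lhsTerm, lhsTerm, lhsRatio, hQ,
    show (n + 1 + 1) * (n + 1 + 2) = (n + 1) * (n + 2) + (2 * n + 4) by ring,
    show 2 * (n + 1 + 1) - 1 = 2 * n + 3 by omega, show 2 * (n + 1) - 1 = 2 * n + 1 by omega,
    pow_add]
  field_simp

lemma rhsTerm_succ (q : ℂ) (n : ℕ) : rhsTerm q (n + 1) = rhsTerm q n * rhsRatio q n := by
  have e : (n + 1 + 1) * (n + 1 + 2) / 2 = (n + 1) * (n + 2) / 2 + (n + 2) := by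
    rw [show (n + 1 + 1) * (n + 1 + 2) = (n + 1) * (n + 2) + (n + 2) * 2 by ring,
      Nat.add_mul_div_right _ _ two_pos]
  rw [rhsTerm, rhsTerm, rhsRatio, e, qPoch_succ q q (n + 1), qPoch_succ (-q) q (n + 1), pow_add]
  simp only [div_eq_mul_inv, mul_inv]
  ring

lemma tendsto_one_add_pow_two_mul_add (hq : ‖q‖ < 1) (c : ℕ) :
    Tendsto (fun n ↦ 1 + q ^ (2 * n + c)) atTop (𝓝 1) := by
  simpa using (tendsto_pow_mul_add_atTop_nhds_zero hq two_ne_zero c).const_add 1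

lemma summable_lhsTerm (hq : ‖q‖ < 1) : Summable (lhsTerm q) := by
  have hρ : Tendsto (lhsRatio q) atTop (𝓝 0) := by
    have := ((tendsto_pow_mul_add_atTop_nhds_zero hq two_ne_zero 4).mul
      (tendsto_one_add_pow_two_mul_add hq 1)).div ((tendsto_one_add_pow_two_mul_add hq 3).mul
      (tendsto_one_add_pow_two_mul_add hq 4)) (mul_ne_zero one_ne_zero one_ne_zero)
    rwa [zero_mul, zero_div] at this
  exact summable_of_succ_eq_mul (lhsTerm_succ hq) hρ (by simp)

lemma summable_rhsTerm (hq : ‖q‖ < 1) : Summable (rhsTerm q) := by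
  have h := (tendsto_pow_atTop_nhds_zero_of_norm_lt_one hq).comp (tendsto_add_atTop_nat 2)
  have hρ : Tendsto (rhsRatio q) atTop (𝓝 0) := by
    have := (h.neg.mul ((tendsto_const_nhds (x := (1 : ℂ))).sub h)).div
      ((tendsto_const_nhds (x := (1 : ℂ))).add h)
      (by norm_num : (1 : ℂ) + 0 ≠ 0)
    rwa [neg_zero, zero_mul, zero_div] at this
  exact summable_of_succ_eq_mul (rhsTerm_succ q) hρ (by simp)

theorem tsum_lhsTerm (hq : ‖q‖ < 1) :
    ∑' n, lhsTerm q n = q ^ 2 / (1 + q) * fineAt q (q ^ 2) 0 := by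
  set y : ℕ → ℂ := fun N ↦ lhsTerm q N * (1 + q ^ (2 * N + 2)) * fineAt q (q ^ 2) N
  have hstep : ∀ N, lhsTerm q N = y N - y (N + 1) := by
    intro N
    simp only [y]
    rw [mul_assoc, fineAt_sq_recurrence hq, lhsTerm_succ hq]
    ring
  have hsum := summable_lhsTerm hq
  have hy : Tendsto y atTop (𝓝 0) := by
    have h := hsum.tendsto_atTop_zero.mul (tendsto_one_add_pow_two_mul_add hq 2)
    rw [zero_mul] at h
    exact h.zero_mul_isBoundedUnder_le
      (isBoundedUnder_norm_fineAt hq fun _ ↦ (norm_pow_lt_one hq two_ne_zero).le)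
  rw [tsum_congr hstep, tsum_sub_succ ((summable_congr hstep).1 hsum) hy]
  have := one_add_ne_zero_of_norm_lt_one hq
  have := one_add_pow_ne_zero hq two_ne_zero
  show lhsTerm q 0 * (1 + q ^ 2) * fineAt q (q ^ 2) 0 = _
  congr 1
  rw [lhsTerm]
  norm_num [qPoch]
  field_simp

theorem neg_mul_tsum_rhsTerm (hq : ‖q‖ < 1) :
    -(q / (1 - q)) * ∑' n, rhsTerm q n = q ^ 2 / (1 + q) * fineAt q (q ^ 2) 0 := by
  set z : ℕ → ℂ := fun m ↦
    -(q / (1 - q)) * rhsTerm q (2 * m) * fineAt q (q ^ (2 * m + 2)) m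
  have hstep : ∀ m,
      -(q / (1 - q)) * (rhsTerm q (2 * m) + rhsTerm q (2 * m + 1)) = z m - z (m + 1) := by
    intro m
    have hnext : rhsTerm q (2 * (m + 1)) = rhsTerm q (2 * m + 1) * rhsRatio q (2 * m + 1) :=
      rhsTerm_succ q (2 * m + 1)
    simp only [z]
    rw [hnext, rhsTerm_succ q (2 * m), fineAt_pow_recurrence hq m]
    ring
  have hsum := summable_rhsTerm hq
  have he : Summable fun m ↦ rhsTerm q (2 * m) := hsum.comp_injective fun _ _ h ↦ by omega
  have ho : Summable fun m ↦ rhsTerm q (2 * m + 1) := hsum.comp_injective fun _ _ h ↦ by omega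
  have hz : Tendsto z atTop (𝓝 0) := by
    have h := he.tendsto_atTop_zero.const_mul (-(q / (1 - q)))
    rw [mul_zero] at h
    exact h.zero_mul_isBoundedUnder_le
      (isBoundedUnder_norm_fineAt hq fun _ ↦ (norm_pow_lt_one hq (by omega)).le)
  have hz0 : -(q / (1 - q)) * rhsTerm q 0 = q ^ 2 / (1 + q) := by
    have := one_add_ne_zero_of_norm_lt_one hq
    have := one_sub_ne_zero_of_norm_lt_one hq
    rw [rhsTerm]
    norm_num [qPoch]
    field_simp
    ring
  calc -(q / (1 - q)) * ∑' n, rhsTerm q n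
      = ∑' m, -(q / (1 - q)) * (rhsTerm q (2 * m) + rhsTerm q (2 * m + 1)) := by
        rw [← tsum_even_add_odd he ho, ← he.tsum_add ho, tsum_mul_left]
    _ = z 0 := by
        rw [tsum_congr hstep,
          tsum_sub_succ ((summable_congr hstep).1 ((he.add ho).mul_left _)) hz]
    _ = q ^ 2 / (1 + q) * fineAt q (q ^ 2) 0 := by
        rw [← hz0]

end Specialization

/-- For |q|<1,
`∑_{n≥1} q^{n(n+1)}/((1+q^{2n-1})(-q²;q²)_n)
  = -(q/(1-q)) ∑_{n≥1} (-1)^n (q;q)_n q^{n(n+1)/2}/(-q;q)_n`. -/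
theorem stmt_4 (q : ℂ) (hq : ‖q‖ < 1) :
    ∑' n : ℕ, q ^ ((n + 1) * (n + 2)) /
        ((1 + q ^ (2 * (n + 1) - 1)) * qPoch (-q ^ 2) (q ^ 2) (n + 1))
      = -(q / (1 - q)) *
          ∑' n : ℕ, (-1 : ℂ) ^ (n + 1) * qPoch q q (n + 1) * q ^ ((n + 1) * (n + 2) / 2) /
            qPoch (-q) q (n + 1) :=
  (tsum_lhsTerm hq).trans (neg_mul_tsum_rhsTerm hq).symm
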